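/- Let s be an infinite Steinitz number and let r be a real number with 1 ≤ r < ∞. Then the sets S(r,s) = { (a/b)·s : a,b ∈ ℕ, b ∈ Ω(s), a ≤ rb } and S⁺(r,s) = { (a/b)·s : a,b ∈ ℕ, b ∈ Ω(s), a < rb } (the latter for rational r = u/v with v ∈ Ω(s)) are saturated sets of Steinitz numbers. -/
import Mathlib


open scoped BigOperators

noncomputable section

/-! ### Steinitz numbers -/

/-- A Steinitz number: a formal product `∏ p ^ r_p` over all primes, with exponents
`r_p ∈ ℕ ∪ {∞}`, encoded as the function sending each prime to its exponent. -/
def SteinitzNumber : Type := Nat.Primes → ℕ∞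

namespace SteinitzNumber

instance : One SteinitzNumber := ⟨fun _ => 0⟩

instance : Mul SteinitzNumber := ⟨fun s t p => s p + t p⟩

/-- The Steinitz number associated with a positive integer `n`. -/
def ofNat (n : ℕ) : SteinitzNumber := fun p => (n.factorization p : ℕ∞)

/-- `b ∈ Ω(s)`: the positive integer `b` divides the Steinitz number `s`. -/
def NatDvd (b : ℕ) (s : SteinitzNumber) : Prop :=
  0 < b ∧ ∀ p : Nat.Primes, (b.factorization p : ℕ∞) ≤ s p

/-- The quotient `s / b` of a Steinitz number by a positive integer dividing it. -/
def divNat (s : SteinitzNumber) (b : ℕ) : SteinitzNumber :=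
  fun p => s p - (b.factorization p : ℕ∞)

/-- An infinite Steinitz number is one which is not a positive integer. -/
def Infinite (s : SteinitzNumber) : Prop := ∀ n : ℕ, s ≠ ofNat n

/-- Steinitz numbers `s` and `t` are rationally connected: `t = (a/b)·s` for positive
integers `a, b` (expressed by cross multiplication). -/
def RationallyConnected (s t : SteinitzNumber) : Prop :=
  ∃ a b : ℕ, 0 < a ∧ 0 < b ∧ ofNat b * t = ofNat a * s

/-- `s₁` finitely divides `s₂`: `s₁ = s₂ / b` for some `b ∈ Ω(s₂)`. -/
def FinDvd (s₁ s₂ : SteinitzNumber) : Prop :=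
  ∃ b : ℕ, NatDvd b s₂ ∧ ofNat b * s₁ = s₂

/-- `s₁ ≤ s₂` iff `s₁ = (a/b)·s₂` with `b ∈ Ω(s₂)` and `1 ≤ a ≤ b`. -/
def Le (s₁ s₂ : SteinitzNumber) : Prop :=
  ∃ a b : ℕ, 0 < a ∧ a ≤ b ∧ NatDvd b s₂ ∧ ofNat b * s₁ = ofNat a * s₂

/-- A saturated set of Steinitz numbers. -/
def Saturated (S : Set SteinitzNumber) : Prop :=
  (∀ s₁ ∈ S, ∀ s₂ ∈ S, RationallyConnected s₁ s₂) ∧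
  (∀ s₂ ∈ S, ∀ s₁, FinDvd s₁ s₂ → s₁ ∈ S) ∧
  (∀ s ∈ S, ∀ n : ℕ, ofNat n * s ∈ S → ∀ k : ℕ, 1 ≤ k → k ≤ n → ofNat k * s ∈ S)

/-- `S(∞, s) = { (a/b)·s : a ∈ ℕ, b ∈ Ω(s) }`. -/
def SInf (s : SteinitzNumber) : Set SteinitzNumber :=
  {t | ∃ a b : ℕ, 0 < a ∧ NatDvd b s ∧ ofNat b * t = ofNat a * s}

/-- `S(r, s) = { (a/b)·s : a, b ∈ ℕ, b ∈ Ω(s), a ≤ r·b }`. -/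
def SBdd (r : ℝ) (s : SteinitzNumber) : Set SteinitzNumber :=
  {t | ∃ a b : ℕ, 0 < a ∧ NatDvd b s ∧ (a : ℝ) ≤ r * b ∧ ofNat b * t = ofNat a * s}

/-- `S⁺(r, s) = { (a/b)·s : a, b ∈ ℕ, b ∈ Ω(s), a < r·b }`. -/
def SBddPlus (r : ℝ) (s : SteinitzNumber) : Set SteinitzNumber :=
  {t | ∃ a b : ℕ, 0 < a ∧ NatDvd b s ∧ (a : ℝ) < r * b ∧ ofNat b * t = ofNat a * s}

end SteinitzNumber

/-! ### Measure algebras -/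

/-- A measure algebra: a Boolean algebra (an associative, commutative algebra over `𝔽₂`
in which every element is idempotent) equipped with a measure `μ` which is positive on
nonzero elements and additive on orthogonal pairs. -/
structure MeasureAlgebra : Type 1 where
  carrier : Type
  [ring : NonUnitalCommRing carrier]
  idem : ∀ x : carrier, x * x = x
  mu : carrier → ℝ
  mu_nonneg : ∀ a, 0 ≤ mu a
  mu_eq_zero_iff : ∀ a, mu a = 0 ↔ a = 0
  mu_add : ∀ a b : carrier, a * b = 0 → mu (a + b) = mu a + mu b

attribute [instance] MeasureAlgebra.ring

namespace MeasureAlgebra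

/-- Isomorphism of measure algebras: a Boolean algebra isomorphism preserving the measures. -/
def Isomorphic (H₁ H₂ : MeasureAlgebra) : Prop :=
  ∃ φ : H₁.carrier ≃+* H₂.carrier, ∀ a, H₂.mu (φ a) = H₁.mu a

/-- Scalar equivalence of measure algebras: a Boolean algebra isomorphism multiplying
the measure by a positive constant `α`. -/
def ScalarEquivalent (H₁ H₂ : MeasureAlgebra) : Prop :=
  ∃ α : ℝ, 0 < α ∧ ∃ φ : H₁.carrier ≃+* H₂.carrier, ∀ a, H₂.mu (φ a) = α * H₁.mu a

/-- The measure subalgebra of a measure algebra supported on a subring, with the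
restricted measure. -/
def restrict (H : MeasureAlgebra) (S : NonUnitalSubring H.carrier) : MeasureAlgebra where
  carrier := S
  idem := fun x => Subtype.ext (H.idem x.1)
  mu := fun x => H.mu x.1
  mu_nonneg := fun a => H.mu_nonneg a.1
  mu_eq_zero_iff := fun a => by
    rw [H.mu_eq_zero_iff a.1]
    exact ⟨fun h => Subtype.ext h, fun h => congrArg Subtype.val h⟩
  mu_add := fun a b hab => H.mu_add a.1 b.1 (congrArg Subtype.val hab)

/-- The standard measure algebra `Stₙ = 𝔽₂ⁿ` with `μ(x₁, …, xₙ) = (x₁ + ⋯ + xₙ)/n`. -/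
def St (n : ℕ) : MeasureAlgebra where
  carrier := Fin n → ZMod 2
  idem := fun x => funext fun i => by
    have h : ∀ a : ZMod 2, a * a = a := by decide
    exact h (x i)
  mu := fun x => (∑ i, ((x i).val : ℝ)) / n
  mu_nonneg := fun a => by positivity
  mu_eq_zero_iff := fun a => by
    constructor
    · intro h
      rcases Nat.eq_zero_or_pos n with hn | hn
      · subst hn; exact funext fun i => i.elim0
      · have hne : ((n : ℝ)) ≠ 0 := by positivity
        have h2 : (∑ i, ((a i).val : ℝ)) = 0 := by
          rcases div_eq_zero_iff.mp h with h' | h'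
          · exact h'
          · exact absurd h' hne
        have h3 := (Finset.sum_eq_zero_iff_of_nonneg
          (fun i _ => by positivity : ∀ i ∈ Finset.univ, (0:ℝ) ≤ ((a i).val : ℝ))).mp h2
        funext i
        have h4 : ((a i).val : ℝ) = 0 := h3 i (Finset.mem_univ i)
        have h5 : (a i).val = 0 := by exact_mod_cast h4
        exact (ZMod.val_eq_zero _).mp h5
    · intro h; subst h; simp
  mu_add := fun a b hab => by
    have key : ∀ u v : ZMod 2, u * v = 0 → (u + v).val = u.val + v.val := by decide
    have h : ∀ i, (((a + b) i).val : ℝ) = ((a i).val : ℝ) + ((b i).val : ℝ) := by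
      intro i
      have h0 : a i * b i = 0 := congrFun hab i
      have h1 := key (a i) (b i) h0
      show (((a i + b i)).val : ℝ) = _
      rw [h1]
      push_cast
      ring
    show (∑ i, (((a + b) i).val : ℝ)) / n
        = (∑ i, ((a i).val : ℝ)) / n + (∑ i, ((b i).val : ℝ)) / n
    rw [← add_div, ← Finset.sum_add_distrib]
    congr 1
    exact Finset.sum_congr rfl fun i _ => h i

/-- A measure algebra is unital if it has an identity element of measure `1`. -/
def Unital (H : MeasureAlgebra) : Prop :=
  ∃ e : H.carrier, (∀ x, e * x = x) ∧ H.mu e = 1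

/-- A measure algebra is locally standard if every finite subset is contained in a
measure subalgebra scalar equivalent to a standard one. -/
def LocallyStandard (H : MeasureAlgebra) : Prop :=
  ∀ t : Finset H.carrier, ∃ (S : NonUnitalSubring H.carrier) (n : ℕ), 0 < n ∧
    (↑t : Set H.carrier) ⊆ S ∧ (H.restrict S).ScalarEquivalent (St n)

/-- For an (idempotent) element `h`, the subring `hH = {x | h·x = x}`. -/
def cornerSubring (H : MeasureAlgebra) (h : H.carrier) : NonUnitalSubring H.carrier where
  carrier := {x | h * x = x}
  zero_mem' := mul_zero h
  add_mem' := by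
    intro a b ha hb
    simp only [Set.mem_setOf_eq] at *
    rw [mul_add, ha, hb]
  neg_mem' := by
    intro a ha
    simp only [Set.mem_setOf_eq] at *
    rw [mul_neg, ha]
  mul_mem' := by
    intro a b ha hb
    simp only [Set.mem_setOf_eq] at *
    rw [← mul_assoc, ha]

/-- The unital measure algebra `H_h = (hH, μ(·)/μ(h))`. -/
def corner (H : MeasureAlgebra) (h : H.carrier) : MeasureAlgebra where
  carrier := H.cornerSubring h
  idem := fun x => Subtype.ext (H.idem x.1)
  mu := fun x => H.mu x.1 / H.mu h
  mu_nonneg := fun a => div_nonneg (H.mu_nonneg a.1) (H.mu_nonneg h)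
  mu_eq_zero_iff := fun a => by
    constructor
    · intro ha
      rcases div_eq_zero_iff.mp ha with h' | h'
      · exact Subtype.ext ((H.mu_eq_zero_iff a.1).mp h')
      · have hh : h = 0 := (H.mu_eq_zero_iff h).mp h'
        have h2 : h * (a : H.carrier) = a := a.2
        apply Subtype.ext
        show (a : H.carrier) = 0
        generalize hx : (a : H.carrier) = x at h2 ⊢
        rw [← h2, hh, zero_mul]
    · intro h'
      subst h'
      have h0 : H.mu ((0 : H.cornerSubring h) : H.carrier) = 0 :=
        (H.mu_eq_zero_iff _).mpr rfl
      show H.mu ((0 : H.cornerSubring h) : H.carrier) / H.mu h = 0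
      rw [h0, zero_div]
  mu_add := fun a b hab => by
    have : H.mu ((a : H.carrier) + b) = H.mu a + H.mu b :=
      H.mu_add a.1 b.1 (congrArg Subtype.val hab)
    show H.mu ((a + b : H.cornerSubring h) : H.carrier) / H.mu h = _
    rw [show ((a + b : H.cornerSubring h) : H.carrier) = (a : H.carrier) + b from rfl,
      this, add_div]

/-- `D(H)`: the set of `n` such that `H` has a subalgebra containing the identity of `H`
and isomorphic to the standard measure algebra `Stₙ`. -/
def D (H : MeasureAlgebra) : Set ℕ :=
  {n | ∃ S : NonUnitalSubring H.carrier,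
    (∃ e ∈ S, ∀ x : H.carrier, e * x = x) ∧ (H.restrict S).Isomorphic (St n)}

/-- The Steinitz number `st(H)` of a (unital locally standard) measure algebra:
the least common multiple of `D(H)`. -/
def st (H : MeasureAlgebra) : SteinitzNumber :=
  fun p => ⨆ n ∈ H.D, (n.factorization p : ℕ∞)

/-- The spectrum of a measure algebra: the set of Steinitz numbers `st(H_h)` for `h ≠ 0`. -/
def Spec (H : MeasureAlgebra) : Set SteinitzNumber :=
  {s | ∃ h : H.carrier, h ≠ 0 ∧ (H.corner h).st = s}

end MeasureAlgebra

namespace SteinitzNumber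

lemma mul_apply' (x y : SteinitzNumber) (p : Nat.Primes) : (x * y) p = x p + y p := rfl

lemma ofNat_apply' (n : ℕ) (p : Nat.Primes) :
    ofNat n p = (n.factorization p : ℕ∞) := rfl

lemma smul_comm' (x y : SteinitzNumber) : x * y = y * x :=
  funext fun p => add_comm (x p) (y p)

lemma smul_assoc' (x y z : SteinitzNumber) : x * y * z = x * (y * z) :=
  funext fun p => add_assoc (x p) (y p) (z p)

lemma ofNat_mul' {m n : ℕ} (hm : m ≠ 0) (hn : n ≠ 0) :
    ofNat (m * n) = ofNat m * ofNat n := by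
  funext p
  rw [mul_apply', ofNat_apply', ofNat_apply', ofNat_apply',
    Nat.factorization_mul hm hn, Finsupp.add_apply, Nat.cast_add]

/-- Reducing a fraction representation `t = (A/B)·s` by the gcd of `A` and `B`
keeps it valid and forces the denominator to divide `s`. -/
lemma reduce {s t : SteinitzNumber} {A B : ℕ} (hA : 0 < A) (hB : 0 < B)
    (h : ofNat B * t = ofNat A * s) :
    ofNat (B / Nat.gcd A B) * t = ofNat (A / Nat.gcd A B) * s ∧
      NatDvd (B / Nat.gcd A B) s := by
  set g := Nat.gcd A B with hgdef
  have hg : 0 < g := Nat.gcd_pos_of_pos_left _ hA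
  have hgA : g ∣ A := Nat.gcd_dvd_left A B
  have hgB : g ∣ B := Nat.gcd_dvd_right A B
  have hfg : g.factorization = A.factorization ⊓ B.factorization :=
    Nat.factorization_gcd hA.ne' hB.ne'
  constructor
  · funext p
    have heq := congrFun h p
    simp only [mul_apply', ofNat_apply'] at heq ⊢
    rw [Nat.factorization_div hgA, Nat.factorization_div hgB, hfg]
    simp only [Finsupp.tsub_apply, Finsupp.inf_apply]
    set α := A.factorization p with hα
    set β := B.factorization p with hβ
    have hm : α ⊓ β = min α β := rfl
    cases hsp : s p with
    | top =>
      have ht : t p = ⊤ := by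
        rw [hsp, add_top] at heq
        exact (WithTop.add_eq_top.mp heq).resolve_left (ENat.coe_ne_top _)
      rw [ht]
      simp
    | coe sn =>
      have ht : ∃ tn : ℕ, t p = (tn : ℕ∞) := by
        rw [hsp] at heq
        cases htt : t p with
        | top =>
          rw [htt] at heq
          simp only [add_top] at heq
          exact absurd heq.symm (by
            rw [← Nat.cast_add]
            exact WithTop.coe_ne_top)
        | coe tn => exact ⟨tn, rfl⟩
      obtain ⟨tn, htn⟩ := ht
      rw [hsp, htn] at heq
      rw [htn]
      rw [← Nat.cast_add, ← Nat.cast_add] at heq ⊢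
      have heqn : β + tn = α + sn := by exact_mod_cast heq
      have : β - α ⊓ β + tn = α - α ⊓ β + sn := by rw [hm]; omega
      exact_mod_cast this
  · refine ⟨Nat.div_pos (Nat.le_of_dvd hB hgB) hg, fun p => ?_⟩
    have heq := congrFun h p
    simp only [mul_apply', ofNat_apply'] at heq
    rw [Nat.factorization_div hgB, hfg]
    simp only [Finsupp.tsub_apply, Finsupp.inf_apply]
    set α := A.factorization p with hα
    set β := B.factorization p with hβ
    have hm : α ⊓ β = min α β := rfl
    cases hsp : s p with
    | top => exact le_top
    | coe sn =>
      have ht : ∃ tn : ℕ, t p = (tn : ℕ∞) := by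
        rw [hsp] at heq
        cases htt : t p with
        | top =>
          rw [htt] at heq
          simp only [add_top] at heq
          exact absurd heq.symm (by
            rw [← Nat.cast_add]
            exact WithTop.coe_ne_top)
        | coe tn => exact ⟨tn, rfl⟩
      obtain ⟨tn, htn⟩ := ht
      rw [hsp, htn, ← Nat.cast_add, ← Nat.cast_add] at heq
      have heqn : β + tn = α + sn := by exact_mod_cast heq
      have : β - α ⊓ β ≤ sn := by rw [hm]; omega
      exact_mod_cast this

/-- Generic saturation lemma for sets of the form
`{ (a/b)·s : b ∈ Ω(s), P a b }`. -/
lemma saturated_gen (s : SteinitzNumber) (P : ℕ → ℕ → Prop)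
    (hdiv : ∀ a b g : ℕ, 0 < g → g ∣ a → g ∣ b → P a b → P (a / g) (b / g))
    (hmul : ∀ a b c : ℕ, 0 < c → P a b → P a (b * c))
    (hscale : ∀ a b k n : ℕ, 1 ≤ k → k ≤ n → P a b → P (k * a) (b * n)) :
    Saturated {t | ∃ a b : ℕ, 0 < a ∧ NatDvd b s ∧ P a b ∧ ofNat b * t = ofNat a * s} := by
  refine ⟨?_, ?_, ?_⟩
  · rintro t₁ ⟨a₁, b₁, ha₁, hb₁, -, he₁⟩ t₂ ⟨a₂, b₂, ha₂, hb₂, -, he₂⟩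
    refine ⟨a₂ * b₁, a₁ * b₂, Nat.mul_pos ha₂ hb₁.1, Nat.mul_pos ha₁ hb₂.1, ?_⟩
    rw [ofNat_mul' ha₁.ne' hb₂.1.ne', ofNat_mul' ha₂.ne' hb₁.1.ne',
      smul_assoc', he₂, smul_assoc', he₁, ← smul_assoc', ← smul_assoc',
      smul_comm' (ofNat a₁) (ofNat a₂)]
  · rintro t₂ ⟨a, b, ha, hb, hP, he⟩ t₁ ⟨c, ⟨hc, -⟩, hce⟩
    have he' : ofNat (b * c) * t₁ = ofNat a * s := by
      rw [ofNat_mul' hb.1.ne' hc.ne', smul_assoc', hce, he]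
    obtain ⟨he'', hd''⟩ := reduce ha (Nat.mul_pos hb.1 hc) he'
    exact ⟨a / Nat.gcd a (b * c), b * c / Nat.gcd a (b * c),
      Nat.div_pos (Nat.le_of_dvd ha (Nat.gcd_dvd_left _ _)) (Nat.gcd_pos_of_pos_left _ ha),
      hd'', hdiv a (b * c) _ (Nat.gcd_pos_of_pos_left _ ha)
        (Nat.gcd_dvd_left _ _) (Nat.gcd_dvd_right _ _) (hmul a b c hc hP), he''⟩
  · rintro s₀ - n ⟨a, b, ha, hb, hP, he⟩ k hk hkn
    have hn : 0 < n := lt_of_lt_of_le hk hkn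
    have he' : ofNat (b * n) * (ofNat k * s₀) = ofNat (k * a) * s := by
      rw [ofNat_mul' hb.1.ne' hn.ne', ofNat_mul' (Nat.one_le_iff_ne_zero.mp hk) ha.ne']
      funext p
      have h := congrFun he p
      simp only [mul_apply'] at h ⊢
      rw [show ofNat b p + ofNat n p + (ofNat k p + s₀ p)
          = ofNat k p + (ofNat b p + (ofNat n p + s₀ p)) by ring, h]
      ring
    have hka : 0 < k * a := Nat.mul_pos hk ha
    obtain ⟨he'', hd''⟩ := reduce hka (Nat.mul_pos hb.1 hn) he'
    exact ⟨k * a / Nat.gcd (k * a) (b * n), b * n / Nat.gcd (k * a) (b * n),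
      Nat.div_pos (Nat.le_of_dvd hka (Nat.gcd_dvd_left _ _)) (Nat.gcd_pos_of_pos_left _ hka),
      hd'', hdiv (k * a) (b * n) _ (Nat.gcd_pos_of_pos_left _ hka)
        (Nat.gcd_dvd_left _ _) (Nat.gcd_dvd_right _ _) (hscale a b k n hk hkn hP), he''⟩

end SteinitzNumber

/-- Let `s` be an infinite Steinitz number and `1 ≤ r < ∞` a real number. Then
`S(r, s) = { (a/b)·s : b ∈ Ω(s), a ≤ r·b }` is saturated; and, for rational
`r = u/v` with `v ∈ Ω(s)`, the set `S⁺(r, s) = { (a/b)·s : b ∈ Ω(s), a < r·b }`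
is saturated as well. -/
theorem sBdd_saturated
    (s : SteinitzNumber) (hs : s.Infinite) (r : ℝ) (hr : 1 ≤ r) :
    SteinitzNumber.Saturated (SteinitzNumber.SBdd r s) ∧
    (∀ u v : ℕ, 0 < u → SteinitzNumber.NatDvd v s → r = (u : ℝ) / v →
      SteinitzNumber.Saturated (SteinitzNumber.SBddPlus r s)) := by
  have hr0 : (0 : ℝ) < r := lt_of_lt_of_le one_pos hr
  constructor
  · refine SteinitzNumber.saturated_gen s (fun a b => (a : ℝ) ≤ r * b) ?_ ?_ ?_
    · intro a b g hg hga hgb hP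
      have hg' : (0 : ℝ) < g := by exact_mod_cast hg
      rw [Nat.cast_div hga hg'.ne', Nat.cast_div hgb hg'.ne', ← mul_div_assoc]
      exact div_le_div_of_nonneg_right hP hg'.le
    · intro a b c hc hP
      have hc' : (1 : ℝ) ≤ c := by exact_mod_cast hc
      have hb' : (0 : ℝ) ≤ b := Nat.cast_nonneg b
      push_cast
      nlinarith
    · intro a b k n hk hkn hP
      have hkn' : (k : ℝ) ≤ n := by exact_mod_cast hkn
      have ha' : (0 : ℝ) ≤ a := Nat.cast_nonneg a
      have hk' : (0 : ℝ) ≤ k := Nat.cast_nonneg k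
      push_cast
      nlinarith
  · intro u v hu hv hruv
    refine SteinitzNumber.saturated_gen s (fun a b => (a : ℝ) < r * b) ?_ ?_ ?_
    · intro a b g hg hga hgb hP
      have hg' : (0 : ℝ) < g := by exact_mod_cast hg
      rw [Nat.cast_div hga hg'.ne', Nat.cast_div hgb hg'.ne', ← mul_div_assoc]
      exact div_lt_div_of_pos_right hP hg'
    · intro a b c hc hP
      have hc' : (1 : ℝ) ≤ c := by exact_mod_cast hc
      have hb' : (0 : ℝ) ≤ b := Nat.cast_nonneg b
      push_cast
      nlinarith
    · intro a b k n hk hkn hP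
      have hkn' : (k : ℝ) ≤ n := by exact_mod_cast hkn
      have hn' : (1 : ℝ) ≤ n := by exact_mod_cast lt_of_lt_of_le hk hkn
      have ha' : (0 : ℝ) ≤ a := Nat.cast_nonneg a
      push_cast
      nlinarith
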